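/- arXiv:2203.08976 — 2 statements merged into one kernel-verified Lean document; each statement's English description precedes it below -/
import Mathlib

section
/- Let E be a finite-dimensional real inner product space of dimension r ≥ 1 and L ⊆ E a ℤ-lattice whose first minimum λ₁ = λ₁(L) satisfies λ₁ > (r/(2π))^{1/2}. Then h⁰_θ(L) ≤ 3^r · (1 − r/(2πλ₁²))^{−1} · e^{−πλ₁²}. -/
/-!
Since `log x ≤ x - 1` and the zero vector contributes `1`, it suffices to bound the sum of
`exp (-π ‖v‖²)` over the nonzero lattice vectors. Writing each term as
`∫_{‖v‖}^∞ 2πt e^{-πt²} dt` and exchanging sum and integral turns this sum into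
`∫_{λ₁}^∞ N(t) 2πt e^{-πt²} dt`, where `N(t)` counts the nonzero lattice vectors of norm `< t`.
Lattice points are `λ₁`-separated, so the balls of radius `λ₁/2` around them are disjoint and,
for `t ≥ λ₁`, lie in the ball of radius `t + λ₁/2 ≤ 3t/2`; comparing volumes gives
`N(t) ≤ (3t/λ₁)^r`. Finally, for `t ≥ λ₁` and `c = (1 - r/(2πλ₁²))⁻¹`,
`2π t^{r+1} e^{-πt²} ≤ -c (t^r e^{-πt²})'`, which integrates to `c λ₁^r e^{-πλ₁²}`.
-/

open Real MeasureTheory Set Metric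

lemma integrable_pow_mul_exp_neg_pi_mul_sq (n : ℕ) :
    Integrable fun t : ℝ => t ^ n * exp (-π * t ^ 2) := by
  simpa [Real.rpow_natCast] using
    integrable_rpow_mul_exp_neg_mul_sq pi_pos (s := n) (by linarith [n.cast_nonneg (α := ℝ)])

-- For `d = 0` the truncated exponent `d - 1` is harmless: its coefficient `d` vanishes.
lemma hasDerivAt_pow_mul_exp_neg_pi_mul_sq (d : ℕ) (t : ℝ) :
    HasDerivAt (fun t => t ^ d * exp (-π * t ^ 2))
      ((d * t ^ (d - 1) - 2 * π * t ^ (d + 1)) * exp (-π * t ^ 2)) t :=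
  ((hasDerivAt_pow d t).mul ((hasDerivAt_pow 2 t).const_mul (-π)).exp).congr_deriv (by
    push_cast; ring)

lemma integrable_neg_deriv_pow_mul_exp_neg_pi_mul_sq (d : ℕ) :
    Integrable fun t : ℝ => (2 * π * t ^ (d + 1) - d * t ^ (d - 1)) * exp (-π * t ^ 2) := by
  refine (((integrable_pow_mul_exp_neg_pi_mul_sq (d + 1)).const_mul (2 * π)).sub
    ((integrable_pow_mul_exp_neg_pi_mul_sq (d - 1)).const_mul d)).congr (.of_forall fun t => ?_)
  simp only [Pi.sub_apply]
  ring

theorem integral_Ioi_neg_deriv_pow_mul_exp_neg_pi_mul_sq (d : ℕ) (a : ℝ) :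
    ∫ t in Ioi a, (2 * π * t ^ (d + 1) - d * t ^ (d - 1)) * exp (-π * t ^ 2) =
      a ^ d * exp (-π * a ^ 2) := by
  have hderiv (t : ℝ) : HasDerivAt (fun t => -(t ^ d * exp (-π * t ^ 2)))
      ((2 * π * t ^ (d + 1) - d * t ^ (d - 1)) * exp (-π * t ^ 2)) t :=
    (hasDerivAt_pow_mul_exp_neg_pi_mul_sq d t).neg.congr_deriv (by ring)
  have hint := (integrable_neg_deriv_pow_mul_exp_neg_pi_mul_sq d).integrableOn (s := Ioi a)
  have hlim := tendsto_zero_of_hasDerivAt_of_integrableOn_Ioi (fun t _ => hderiv t) hint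
    (integrable_pow_mul_exp_neg_pi_mul_sq d).neg.integrableOn
  rw [integral_Ioi_of_hasDerivAt_of_tendsto' (fun t _ => hderiv t) hint hlim]
  ring

theorem lintegral_Ioi_two_pi_mul_exp_neg_pi_mul_sq {a : ℝ} (ha : 0 ≤ a) :
    ∫⁻ t in Ioi a, ENNReal.ofReal (2 * π * t * exp (-π * t ^ 2)) =
      ENNReal.ofReal (exp (-π * a ^ 2)) := by
  have h := integral_Ioi_neg_deriv_pow_mul_exp_neg_pi_mul_sq 0 a
  have hint := (integrable_neg_deriv_pow_mul_exp_neg_pi_mul_sq 0).integrableOn (s := Ioi a)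
  simp only [zero_add, pow_one, CharP.cast_eq_zero, zero_mul, sub_zero, pow_zero, one_mul]
    at h hint
  rw [← h, ofReal_integral_eq_lintegral_ofReal hint]
  filter_upwards [ae_restrict_mem measurableSet_Ioi] with t ht
  have : 0 < t := ha.trans_lt ht
  positivity

theorem lintegral_Ioi_div_pow_mul_two_pi_mul_exp_neg_pi_mul_sq_le {d : ℕ} {a : ℝ} (ha : 0 < a)
    (hd : d < 2 * π * a ^ 2) :
    ∫⁻ t in Ioi a, ENNReal.ofReal ((t / a) ^ d * (2 * π * t * exp (-π * t ^ 2))) ≤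
      ENNReal.ofReal ((1 - d / (2 * π * a ^ 2))⁻¹ * exp (-π * a ^ 2)) := by
  set c := (1 - d / (2 * π * a ^ 2))⁻¹
  have hc : 0 < 1 - d / (2 * π * a ^ 2) := by
    rw [sub_pos, div_lt_one (by positivity)]; exact hd
  have hmoment (t : ℝ) (ht : a < t) :
      2 * π * t ^ (d + 1) ≤ c * (2 * π * t ^ (d + 1) - d * t ^ (d - 1)) := by
    have ht0 : 0 < t := ha.trans ht
    have hpow : d * t ^ (d - 1) * a ^ 2 ≤ d * t ^ (d + 1) := by
      rcases d with _ | n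
      · simp
      · rw [show n + 1 + 1 = n + 2 by ring, pow_add, Nat.add_sub_cancel, ← mul_assoc]
        gcongr
    have hexpand : (1 - d / (2 * π * a ^ 2)) * (2 * π * t ^ (d + 1)) =
        2 * π * t ^ (d + 1) - d * t ^ (d + 1) / a ^ 2 := by
      field_simp
    have hdiv : d * t ^ (d - 1) ≤ d * t ^ (d + 1) / a ^ 2 :=
      (le_div_iff₀ (by positivity)).2 hpow
    rw [le_inv_mul_iff₀ hc, hexpand]
    linarith
  have hpointwise (t : ℝ) (ht : a < t) :
      (t / a) ^ d * (2 * π * t * exp (-π * t ^ 2)) ≤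
        c / a ^ d * ((2 * π * t ^ (d + 1) - d * t ^ (d - 1)) * exp (-π * t ^ 2)) :=
    calc (t / a) ^ d * (2 * π * t * exp (-π * t ^ 2))
        = 2 * π * t ^ (d + 1) * (exp (-π * t ^ 2) / a ^ d) := by rw [div_pow]; ring
      _ ≤ c * (2 * π * t ^ (d + 1) - d * t ^ (d - 1)) * (exp (-π * t ^ 2) / a ^ d) :=
        mul_le_mul_of_nonneg_right (hmoment t ht) (by positivity)
      _ = _ := by ring
  calc ∫⁻ t in Ioi a, ENNReal.ofReal ((t / a) ^ d * (2 * π * t * exp (-π * t ^ 2)))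
      ≤ ∫⁻ t in Ioi a, ENNReal.ofReal (c / a ^ d *
          ((2 * π * t ^ (d + 1) - d * t ^ (d - 1)) * exp (-π * t ^ 2))) :=
        setLIntegral_mono' measurableSet_Ioi fun t ht =>
          ENNReal.ofReal_le_ofReal (hpointwise t ht)
    _ = ENNReal.ofReal (∫ t in Ioi a, c / a ^ d *
          ((2 * π * t ^ (d + 1) - d * t ^ (d - 1)) * exp (-π * t ^ 2))) := by
        rw [ofReal_integral_eq_lintegral_ofReal]
        · exact ((integrable_neg_deriv_pow_mul_exp_neg_pi_mul_sq d).const_mul _).integrableOn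
        · filter_upwards [ae_restrict_mem measurableSet_Ioi] with t ht
          have : 0 < t := ha.trans ht
          exact (by positivity : (0 : ℝ) ≤ _).trans (hpointwise t ht)
    _ = ENNReal.ofReal (c * exp (-π * a ^ 2)) := by
        rw [integral_const_mul, integral_Ioi_neg_deriv_pow_mul_exp_neg_pi_mul_sq]
        field_simp

theorem tsum_ofReal_exp_neg_pi_mul_sq_eq_lintegral {ι : Type*} [Countable ι] (ρ : ι → ℝ)
    {a : ℝ} (ha : 0 ≤ a) (hρ : ∀ i, a ≤ ρ i) :
    ∑' i, ENNReal.ofReal (exp (-π * ρ i ^ 2)) =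
      ∫⁻ t in Ioi a,
        {i | ρ i < t}.encard * ENNReal.ofReal (2 * π * t * exp (-π * t ^ 2)) := by
  set g := fun t : ℝ => ENNReal.ofReal (2 * π * t * exp (-π * t ^ 2))
  have hterm (i : ι) :
      ENNReal.ofReal (exp (-π * ρ i ^ 2)) = ∫⁻ t in Ioi a, (Ioi (ρ i)).indicator g t := by
    rw [lintegral_indicator measurableSet_Ioi, Measure.restrict_restrict measurableSet_Ioi,
      Ioi_inter_Ioi, sup_eq_left.2 (hρ i),
      lintegral_Ioi_two_pi_mul_exp_neg_pi_mul_sq (ha.trans (hρ i))]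
  have hcount (t : ℝ) : ∑' i, (Ioi (ρ i)).indicator g t = {i | ρ i < t}.encard * g t := by
    rw [← ENNReal.tsum_set_const, tsum_subtype {i | ρ i < t} fun _ => g t]
    congr 1 with i
  have hmeas : Measurable g := by fun_prop
  simp_rw [hterm]
  rw [← lintegral_tsum fun i => (hmeas.indicator measurableSet_Ioi).aemeasurable]
  simp only [hcount, g]

theorem Set.Pairwise.pairwiseDisjoint_ball_half {X : Type*} [PseudoMetricSpace X] {S : Set X}
    {δ : ℝ} (hS : S.Pairwise fun u v => δ ≤ dist u v) :
    S.PairwiseDisjoint fun v => ball v (δ / 2) :=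
  fun _ hu _ hv huv => ball_disjoint_ball (by linarith [hS hu hv huv])

theorem Set.Pairwise.countable_of_le_dist {X : Type*} [PseudoMetricSpace X]
    [TopologicalSpace.SeparableSpace X] {S : Set X} {δ : ℝ} (hδ : 0 < δ)
    (hS : S.Pairwise fun u v => δ ≤ dist u v) : S.Countable :=
  hS.pairwiseDisjoint_ball_half.countable_of_isOpen (fun _ _ => isOpen_ball)
    fun _ _ => nonempty_ball.2 (half_pos hδ)

theorem Set.Pairwise.encard_mul_le_of_le_dist {E : Type*} [NormedAddCommGroup E]
    [NormedSpace ℝ E] [FiniteDimensional ℝ E] {S : Set E} {x : E} {δ R : ℝ} (hδ : 0 < δ)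
    (hR : 0 ≤ R) (hS : S.Pairwise fun u v => δ ≤ dist u v) (hSR : S ⊆ closedBall x R) :
    S.encard * ENNReal.ofReal ((δ / 2) ^ Module.finrank ℝ E) ≤
      ENNReal.ofReal ((R + δ / 2) ^ Module.finrank ℝ E) := by
  borelize E
  let μ := (Module.finBasis ℝ E).addHaar
  have hcover : (⋃ v ∈ S, ball v (δ / 2)) ⊆ ball x (R + δ / 2) := by
    refine iUnion₂_subset fun v hv => ball_subset_ball' ?_
    linarith [mem_closedBall.1 (hSR hv)]
  have hmeasure : S.encard * μ (ball 0 (δ / 2)) ≤ μ (ball x (R + δ / 2)) :=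
    calc S.encard * μ (ball 0 (δ / 2))
        = ∑' v : S, μ (ball (v : E) (δ / 2)) := by
          simp only [Measure.addHaar_ball_center, ENNReal.tsum_set_const]
      _ = μ (⋃ v ∈ S, ball v (δ / 2)) :=
          (measure_biUnion (hS.countable_of_le_dist hδ) hS.pairwiseDisjoint_ball_half
            fun _ _ => measurableSet_ball).symm
      _ ≤ _ := measure_mono hcover
  rwa [Measure.addHaar_ball_of_pos μ _ (half_pos hδ),
    Measure.addHaar_ball_of_pos μ x (by positivity), ← mul_assoc,
    ENNReal.mul_le_mul_iff_left (measure_ball_pos μ 0 one_pos).ne'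
      measure_ball_lt_top.ne] at hmeasure

section Lattice

variable {E : Type*} [NormedAddCommGroup E]

theorem AddSubgroup.pairwise_le_dist (L : AddSubgroup E) {δ : ℝ}
    (hL : ∀ v ∈ L, v ≠ 0 → δ ≤ ‖v‖) :
    (L : Set E).Pairwise fun u v => δ ≤ dist u v :=
  fun u hu v hv huv =>
    (hL _ (L.sub_mem hu hv) (sub_ne_zero.2 huv)).trans_eq (dist_eq_norm u v).symm

variable [NormedSpace ℝ E] [FiniteDimensional ℝ E]

theorem AddSubgroup.encard_inter_ball_le (L : AddSubgroup E) {δ t : ℝ} (hδ : 0 < δ)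
    (hδt : δ ≤ t) (hL : ∀ v ∈ L, v ≠ 0 → δ ≤ ‖v‖) :
    ((L : Set E) ∩ ball 0 t).encard ≤ ENNReal.ofReal ((3 * t / δ) ^ Module.finrank ℝ E) := by
  have ht : 0 < t := hδ.trans_le hδt
  have hsep : ((L : Set E) ∩ ball 0 t).Pairwise fun u v => δ ≤ dist u v :=
    (L.pairwise_le_dist hL).mono inter_subset_left
  have hpack := hsep.encard_mul_le_of_le_dist hδ ht.le
    (inter_subset_right.trans ball_subset_closedBall)
  have hradius : (t + δ / 2) ^ Module.finrank ℝ E ≤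
      (3 * t / δ) ^ Module.finrank ℝ E * (δ / 2) ^ Module.finrank ℝ E := by
    rw [← mul_pow]
    gcongr
    field_simp
    linarith
  rw [← ENNReal.mul_le_mul_iff_left (c := ENNReal.ofReal ((δ / 2) ^ Module.finrank ℝ E))
    (ENNReal.ofReal_pos.2 (by positivity)).ne' ENNReal.ofReal_ne_top,
    ← ENNReal.ofReal_mul (by positivity)]
  exact hpack.trans (ENNReal.ofReal_le_ofReal hradius)

theorem AddSubgroup.tsum_compl_zero_ofReal_exp_le (L : AddSubgroup E) {δ : ℝ} (hδ : 0 < δ)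
    (hL : ∀ v ∈ L, v ≠ 0 → δ ≤ ‖v‖) (hd : Module.finrank ℝ E < 2 * π * δ ^ 2) :
    ∑' v : ({0}ᶜ : Set L), ENNReal.ofReal (exp (-π * ‖((v : L) : E)‖ ^ 2)) ≤
      ENNReal.ofReal (3 ^ Module.finrank ℝ E *
        (1 - Module.finrank ℝ E / (2 * π * δ ^ 2))⁻¹ * exp (-π * δ ^ 2)) := by
  set d := Module.finrank ℝ E
  have : Countable L := ((L.pairwise_le_dist hL).countable_of_le_dist hδ).to_subtype
  rw [tsum_ofReal_exp_neg_pi_mul_sq_eq_lintegral (fun v : ({0}ᶜ : Set L) => ‖((v : L) : E)‖)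
    hδ.le fun v => hL _ v.1.2 fun h => v.2 (Subtype.ext h)]
  calc ∫⁻ t in Ioi δ, {v : ({0}ᶜ : Set L) | ‖((v : L) : E)‖ < t}.encard *
        ENNReal.ofReal (2 * π * t * exp (-π * t ^ 2))
      ≤ ∫⁻ t in Ioi δ, ENNReal.ofReal (3 ^ d) *
          ENNReal.ofReal ((t / δ) ^ d * (2 * π * t * exp (-π * t ^ 2))) := by
        refine setLIntegral_mono' measurableSet_Ioi fun t ht => ?_
        have ht0 : 0 < t := hδ.trans ht
        have hcount : {v : ({0}ᶜ : Set L) | ‖((v : L) : E)‖ < t}.encard ≤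
            ((L : Set E) ∩ ball 0 t).encard :=
          encard_le_encard_of_injOn (fun v hv => ⟨v.1.2, mem_ball_zero_iff.2 hv⟩)
            (Subtype.val_injective.comp Subtype.val_injective).injOn
        calc _ ≤ ENNReal.ofReal ((3 * t / δ) ^ d) *
              ENNReal.ofReal (2 * π * t * exp (-π * t ^ 2)) := by
              gcongr
              exact (ENat.toENNReal_le.2 hcount).trans (L.encard_inter_ball_le hδ ht.le hL)
          _ = _ := by
              rw [← ENNReal.ofReal_mul (by positivity), ← ENNReal.ofReal_mul (by positivity),
                mul_div_assoc, mul_pow]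
              ring_nf
    _ = ENNReal.ofReal (3 ^ d) * ∫⁻ t in Ioi δ,
          ENNReal.ofReal ((t / δ) ^ d * (2 * π * t * exp (-π * t ^ 2))) :=
        lintegral_const_mul' _ _ ENNReal.ofReal_ne_top
    _ ≤ ENNReal.ofReal (3 ^ d) *
          ENNReal.ofReal ((1 - d / (2 * π * δ ^ 2))⁻¹ * exp (-π * δ ^ 2)) := by
        gcongr
        exact lintegral_Ioi_div_pow_mul_two_pi_mul_exp_neg_pi_mul_sq_le hδ hd
    _ = _ := by rw [← ENNReal.ofReal_mul (by positivity), ← mul_assoc]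

end Lattice

theorem Real.log_tsum_le_of_tsum_compl_singleton_le {ι : Type*} {f : ι → ℝ}
    (hf : ∀ i, 0 ≤ f i) {i₀ : ι} (hi₀ : f i₀ = 1) {T : ℝ} (hT : 0 ≤ T)
    (h : ∑' i : ({i₀}ᶜ : Set ι), ENNReal.ofReal (f i) ≤ ENNReal.ofReal T) :
    log (∑' i, f i) ≤ T := by
  have hsplit :
      ∑' i, ENNReal.ofReal (f i) = 1 + ∑' i : ({i₀}ᶜ : Set ι), ENNReal.ofReal (f i) := by
    rw [← ENNReal.summable.tsum_add_tsum_compl (s := {i₀}) ENNReal.summable,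
      tsum_singleton i₀ fun i => ENNReal.ofReal (f i), hi₀, ENNReal.ofReal_one]
  have hupper : ∑' i, ENNReal.ofReal (f i) ≤ ENNReal.ofReal (1 + T) := by
    rw [hsplit, ENNReal.ofReal_add zero_le_one hT, ENNReal.ofReal_one]
    gcongr
  have hreal : ∑' i, f i = (∑' i, ENNReal.ofReal (f i)).toReal := by
    rw [ENNReal.tsum_toReal_eq fun _ => ENNReal.ofReal_ne_top]
    simp only [ENNReal.toReal_ofReal (hf _)]
  have hge : 1 ≤ ∑' i, f i := by
    rw [hreal, ← ENNReal.toReal_one]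
    exact ENNReal.toReal_mono (ne_top_of_le_ne_top ENNReal.ofReal_ne_top hupper)
      (hsplit ▸ le_self_add)
  have hle : ∑' i, f i ≤ 1 + T :=
    hreal ▸ ENNReal.toReal_le_of_le_ofReal (by positivity) hupper
  linarith [log_le_sub_one_of_pos (zero_lt_one.trans_le hge)]

theorem theta_le_of_large_first_minimum_general {E : Type*} [NormedAddCommGroup E]
    [InnerProductSpace ℝ E] [FiniteDimensional ℝ E]
    (L : Submodule ℤ E) (lam : ℝ)
    (hlam : lam = sInf ((fun v : E => ‖v‖) '' {v : E | v ∈ L ∧ v ≠ 0}))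
    (hbig : Real.sqrt ((Module.finrank ℝ E : ℝ) / (2 * π)) < lam) :
    Real.log (∑' v : L, Real.exp (-π * ‖(v : E)‖ ^ 2)) ≤
      3 ^ Module.finrank ℝ E *
        (1 - (Module.finrank ℝ E : ℝ) / (2 * π * lam ^ 2))⁻¹ * Real.exp (-π * lam ^ 2) := by
  have hlam_pos : 0 < lam := (sqrt_nonneg _).trans_lt hbig
  have hmin : ∀ v ∈ L, v ≠ 0 → lam ≤ ‖v‖ := fun v hv hv0 =>
    hlam ▸ csInf_le ⟨0, by rintro _ ⟨w, -, rfl⟩; exact norm_nonneg w⟩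
      ⟨v, ⟨hv, hv0⟩, rfl⟩
  have hrank : (Module.finrank ℝ E : ℝ) < 2 * π * lam ^ 2 := by
    have := (sqrt_lt' hlam_pos).1 hbig
    rwa [div_lt_iff₀ two_pi_pos, mul_comm] at this
  have hc : 0 < 1 - (Module.finrank ℝ E : ℝ) / (2 * π * lam ^ 2) := by
    rw [sub_pos, div_lt_one (by positivity)]; exact hrank
  exact log_tsum_le_of_tsum_compl_singleton_le (fun _ => (exp_pos _).le) (i₀ := 0) (by simp)
    (by positivity) (L.toAddSubgroup.tsum_compl_zero_ofReal_exp_le hlam_pos hmin hrank)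

/-- If the first minimum `λ₁` of a rank-`r` ℤ-lattice `L` satisfies `λ₁ > (r/(2π))^{1/2}`,
then `h⁰_θ(L) ≤ 3^r (1 - r/(2πλ₁²))⁻¹ e^{-πλ₁²}`. -/
theorem theta_le_of_large_first_minimum {E : Type*} [NormedAddCommGroup E]
    [InnerProductSpace ℝ E] [FiniteDimensional ℝ E]
    (L : Submodule ℤ E) [DiscreteTopology L] [IsZLattice ℝ L]
    (hr : 1 ≤ Module.finrank ℝ E) (lam : ℝ)
    (hlam : lam = sInf ((fun v : E => ‖v‖) '' {v : E | v ∈ L ∧ v ≠ 0}))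
    (hbig : Real.sqrt ((Module.finrank ℝ E : ℝ) / (2 * π)) < lam) :
    Real.log (∑' v : L, Real.exp (-π * ‖(v : E)‖ ^ 2)) ≤
      3 ^ Module.finrank ℝ E *
        (1 - (Module.finrank ℝ E : ℝ) / (2 * π * lam ^ 2))⁻¹ * Real.exp (-π * lam ^ 2) :=
  theta_le_of_large_first_minimum_general L lam hlam hbig
end

section
/- (Theta-finiteness.) Let (E_n)_{n ∈ ℕ} be a sequence of finite-dimensional real inner product spaces and, for each n, let L_n ⊆ E_n be a nonzero ℤ-lattice. Suppose there exist constants C, C₃, A, A₃ > 0 and a real number τ with 0 < τ < 1 such that for all n: rank(L_n) ≤ C₃ · e^{A₃√n} and λ₁(L_n) ≥ C · e^{−A√n} · τ^{−n}. Then for every real number t > 0, the series ∑_{n ≥ 0} log ( ∑_{v ∈ L_n} exp(−π t ‖v‖²) ) converges. -/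
/-!
If every nonzero vector of a lattice `Λ` in a space of dimension `d` has norm at least `r`,
the disjoint balls of radius `r / 2` around lattice points show that at most `(2k + 5)^d`
lattice vectors have norm `≤ (k + 2) r`. Sorting the nonzero vectors into the shells `(k + 1) r ≤ ‖v‖ ≤ (k + 2) r` gives
`θ(t) ≤ 1 + ∑ₖ (2k + 5)^d e^{-π t r² (k + 1)} ≤ 1 + 2 e^{2d - π t r²}` once `π t r² ≥ 2d + 1`,
hence `0 ≤ log θ(t) ≤ 2 e^{2d - π t r²}`. For `Lₙ` the bound `π t rₙ²` grows like
`e^{2n log(1/τ) - O(√n)}`, which eventually beats `2 dim Eₙ + n + 1`, so the `n`-th term is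
at most `2 e^{-n}` for large `n`.
-/

open Real Filter MeasureTheory Metric Module Asymptotics
open scoped ENNReal

lemma card_le_of_separated_of_norm_le {V : Type*} [NormedAddCommGroup V] [NormedSpace ℝ V]
    [FiniteDimensional ℝ V] {r R : ℝ} (hr : 0 < r) (hR : 0 ≤ R) (s : Finset V)
    (hsep : ∀ v ∈ s, ∀ w ∈ s, v ≠ w → r ≤ ‖v - w‖) (hnorm : ∀ v ∈ s, ‖v‖ ≤ R) :
    (s.card : ℝ) ≤ (2 * R / r + 1) ^ finrank ℝ V := by
  borelize V
  set μ : Measure V := Measure.addHaar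
  have hdisj : (s : Set V).PairwiseDisjoint fun v => ball v (r / 2) := fun v hv w hw hvw =>
    ball_disjoint_ball (by rw [dist_eq_norm]; linarith [hsep v hv w hw hvw])
  have hsub : (⋃ v ∈ s, ball v (r / 2)) ⊆ ball 0 (R + r / 2) := by
    simp only [Set.iUnion_subset_iff]
    exact fun v hv => ball_subset_ball' (by rw [dist_zero_right]; linarith [hnorm v hv])
  have hvol : (s.card : ℝ≥0∞) * ENNReal.ofReal ((r / 2) ^ finrank ℝ V) * μ (ball 0 1) ≤
      ENNReal.ofReal ((R + r / 2) ^ finrank ℝ V) * μ (ball 0 1) := by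
    have := measure_mono (μ := μ) hsub
    rwa [measure_biUnion_finset hdisj fun _ _ => measurableSet_ball,
      Finset.sum_congr rfl fun v _ => μ.addHaar_ball_of_pos v (half_pos hr), Finset.sum_const,
      nsmul_eq_mul, μ.addHaar_ball_of_pos 0 (show 0 < R + r / 2 by positivity), ← mul_assoc] at this
  rw [ENNReal.mul_le_mul_iff_left (measure_ball_pos μ 0 one_pos).ne' measure_ball_lt_top.ne,
    ← ENNReal.ofReal_natCast, ← ENNReal.ofReal_mul (by positivity),
    ENNReal.ofReal_le_ofReal_iff (by positivity), ← le_div_iff₀ (by positivity), ← div_pow]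
    at hvol
  refine hvol.trans_eq (congrArg (· ^ _) ?_)
  field_simp

lemma two_mul_add_three_le_exp_two_mul {x : ℝ} (hx : 1 ≤ x) : 2 * x + 3 ≤ exp (2 * x) := by
  nlinarith [quadratic_le_exp_of_nonneg (by linarith : 0 ≤ 2 * x)]

lemma tsum_ofReal_pow_mul_exp_le {d : ℕ} {s : ℝ} (hs : 2 * d + 1 ≤ s) :
    ∑' k : ℕ, ENNReal.ofReal ((2 * k + 5) ^ d * exp (-s * (k + 1))) ≤
      ENNReal.ofReal (2 * exp (2 * d - s)) := by
  set a := exp (2 * d - s)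
  have ha : ENNReal.ofReal a ≤ 2⁻¹ :=
    calc ENNReal.ofReal a ≤ ENNReal.ofReal 2⁻¹ := ENNReal.ofReal_le_ofReal <|
          (exp_le_exp.mpr (by linarith)).trans (exp_neg_one_lt_half.le.trans_eq (one_div 2))
      _ = 2⁻¹ := by rw [ENNReal.ofReal_inv_of_pos two_pos, ENNReal.ofReal_ofNat]
  have hterm (k : ℕ) : (2 * k + 5) ^ d * exp (-s * (k + 1)) ≤ a ^ (k + 1) :=
    calc (2 * k + 5 : ℝ) ^ d * exp (-s * (k + 1))
        ≤ exp (2 * (k + 1)) ^ d * exp (-s * (k + 1)) := by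
          gcongr
          linarith [two_mul_add_three_le_exp_two_mul (x := k + 1) (by simp)]
      _ = a ^ (k + 1) := by
          rw [← exp_nat_mul, ← exp_add, ← exp_nat_mul]
          push_cast
          ring_nf
  calc _ ≤ ∑' k : ℕ, ENNReal.ofReal a ^ (k + 1) := ENNReal.tsum_le_tsum fun k => by
          rw [← ENNReal.ofReal_pow (exp_pos _).le]
          exact ENNReal.ofReal_le_ofReal (hterm k)
    _ = ENNReal.ofReal a * (1 - ENNReal.ofReal a)⁻¹ := ENNReal.tsum_geometric_add_one _
    _ ≤ ENNReal.ofReal a * (1 - 2⁻¹)⁻¹ := by gcongr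
    _ = ENNReal.ofReal a * 2 := by rw [ENNReal.one_sub_inv_two, inv_inv]
    _ = ENNReal.ofReal (2 * a) := by
          rw [mul_comm, ENNReal.ofReal_mul zero_le_two, ENNReal.ofReal_ofNat]

namespace Submodule

section

variable {V : Type*} [NormedAddCommGroup V] {Λ : Submodule ℤ V}

lemma ofReal_exp_neg_mul_norm_sq_le_tsum_indicator {r t : ℝ} (hr : 0 < r) (ht : 0 ≤ t)
    (hmin : ∀ v ∈ Λ, v ≠ 0 → r ≤ ‖v‖) {v : Λ} (hv : v ≠ 0) :
    ENNReal.ofReal (exp (-π * t * ‖(v : V)‖ ^ 2)) ≤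
      ∑' k : ℕ, {w : Λ | ‖(w : V)‖ ≤ (k + 2) * r}.indicator
        (fun _ => ENNReal.ofReal (exp (-π * t * r ^ 2 * (k + 1)))) v := by
  obtain ⟨k, hlow, hup⟩ : ∃ k : ℕ, (k + 1) * r ≤ ‖(v : V)‖ ∧ ‖(v : V)‖ ≤ (k + 2) * r := by
    have hK : 1 ≤ ⌊‖(v : V)‖ / r⌋₊ :=
      Nat.le_floor <| by rw [Nat.cast_one, le_div_iff₀ hr, one_mul]; exact hmin v v.2 (by simpa)
    refine ⟨⌊‖(v : V)‖ / r⌋₊ - 1, ?_, ?_⟩ <;> push_cast [hK]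
    · exact (le_div_iff₀ hr).mp (by simpa using Nat.floor_le (by positivity))
    · exact (div_le_iff₀ hr).mp (by linarith [Nat.lt_floor_add_one (‖(v : V)‖ / r)])
  refine le_trans ?_ (ENNReal.le_tsum k)
  rw [Set.indicator_of_mem (by exact hup)]
  refine ENNReal.ofReal_le_ofReal (exp_le_exp.mpr ?_)
  have hsq : r ^ 2 * (k + 1) ≤ ‖(v : V)‖ ^ 2 :=
    calc r ^ 2 * (k + 1) ≤ ((k + 1) * r) ^ 2 := by nlinarith [sq_nonneg r]
      _ ≤ ‖(v : V)‖ ^ 2 := by gcongr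
  nlinarith [mul_le_mul_of_nonneg_left hsq (by positivity : 0 ≤ π * t)]

end

variable {V : Type*} [NormedAddCommGroup V] [NormedSpace ℝ V] [FiniteDimensional ℝ V]
  (Λ : Submodule ℤ V) [DiscreteTopology Λ]

lemma finite_setOf_norm_le (R : ℝ) : {v : Λ | ‖(v : V)‖ ≤ R}.Finite := by
  have : (closedBall (0 : V) R ∩ (Λ.toAddSubgroup : Set V)).Finite :=
    finite_isBounded_inter_isClosed DiscreteTopology.isDiscrete isBounded_closedBall
      inferInstance
  exact (this.preimage Subtype.val_injective.injOn).subset fun v hv =>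
    ⟨mem_closedBall_zero_iff.mpr hv, v.2⟩

variable {Λ}

lemma ncard_setOf_norm_le_le {r R : ℝ} (hr : 0 < r) (hR : 0 ≤ R)
    (hmin : ∀ v ∈ Λ, v ≠ 0 → r ≤ ‖v‖) :
    ({v : Λ | ‖(v : V)‖ ≤ R}.ncard : ℝ) ≤ (2 * R / r + 1) ^ finrank ℝ V := by
  classical
  have hfin := Λ.finite_setOf_norm_le R
  rw [Set.ncard_eq_toFinset_card _ hfin, ← Finset.card_map (Function.Embedding.subtype _)]
  refine card_le_of_separated_of_norm_le hr hR _ ?_ ?_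
  · simp only [Finset.mem_map, Set.Finite.mem_toFinset, Function.Embedding.subtype_apply]
    rintro _ ⟨v, -, rfl⟩ _ ⟨w, -, rfl⟩ hvw
    exact hmin _ (Λ.sub_mem v.2 w.2) (sub_ne_zero.mpr hvw)
  · simp only [Finset.mem_map, Set.Finite.mem_toFinset, Function.Embedding.subtype_apply]
    rintro _ ⟨v, hv, rfl⟩
    exact hv

lemma tsum_ofReal_exp_neg_mul_norm_sq_le {r t : ℝ} (hr : 0 < r) (ht : 0 ≤ t)
    (hmin : ∀ v ∈ Λ, v ≠ 0 → r ≤ ‖v‖) :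
    ∑' v : Λ, ENNReal.ofReal (exp (-π * t * ‖(v : V)‖ ^ 2)) ≤
      1 + ∑' k : ℕ, ENNReal.ofReal
        ((2 * k + 5) ^ finrank ℝ V * exp (-π * t * r ^ 2 * (k + 1))) := by
  rw [ENNReal.tsum_eq_add_tsum_ite 0]
  gcongr
  · simp
  calc _ ≤ ∑' (v : Λ) (k : ℕ), {w : Λ | ‖(w : V)‖ ≤ (k + 2) * r}.indicator
          (fun _ => ENNReal.ofReal (exp (-π * t * r ^ 2 * (k + 1)))) v := by
        refine ENNReal.tsum_le_tsum fun v => ?_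
        split_ifs with hv
        · exact zero_le
        · exact ofReal_exp_neg_mul_norm_sq_le_tsum_indicator hr ht hmin hv
    _ = ∑' k : ℕ, {w : Λ | ‖(w : V)‖ ≤ (k + 2) * r}.encard *
          ENNReal.ofReal (exp (-π * t * r ^ 2 * (k + 1))) := by
        rw [ENNReal.tsum_comm]
        simp_rw [← tsum_subtype, ENNReal.tsum_set_const]
    _ ≤ _ := by
        refine ENNReal.tsum_le_tsum fun k => ?_
        rw [ENNReal.ofReal_mul (by positivity)]
        gcongr
        rw [← (Λ.finite_setOf_norm_le _).cast_ncard_eq, ENat.toENNReal_coe,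
          ← ENNReal.ofReal_natCast]
        refine ENNReal.ofReal_le_ofReal <|
          (ncard_setOf_norm_le_le hr (by positivity) hmin).trans_eq ?_
        field_simp
        ring

lemma abs_log_tsum_exp_neg_mul_norm_sq_le {r t : ℝ} (hr : 0 < r) (ht : 0 ≤ t)
    (hmin : ∀ v ∈ Λ, v ≠ 0 → r ≤ ‖v‖) (hs : 2 * finrank ℝ V + 1 ≤ π * t * r ^ 2) :
    |log (∑' v : Λ, exp (-π * t * ‖(v : V)‖ ^ 2))| ≤
      2 * exp (2 * finrank ℝ V - π * t * r ^ 2) := by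
  set θ := ∑' v : Λ, ENNReal.ofReal (exp (-π * t * ‖(v : V)‖ ^ 2))
  have hθ_le : θ ≤ ENNReal.ofReal (1 + 2 * exp (2 * finrank ℝ V - π * t * r ^ 2)) := by
    rw [ENNReal.ofReal_add zero_le_one (by positivity), ENNReal.ofReal_one]
    refine (tsum_ofReal_exp_neg_mul_norm_sq_le hr ht hmin).trans ?_
    gcongr
    simpa only [neg_mul] using tsum_ofReal_pow_mul_exp_le hs
  have hone_le : 1 ≤ θ :=
    calc 1 = ENNReal.ofReal (exp (-π * t * ‖((0 : Λ) : V)‖ ^ 2)) := by simp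
      _ ≤ θ := ENNReal.le_tsum 0
  have heq : ∑' v : Λ, exp (-π * t * ‖(v : V)‖ ^ 2) = θ.toReal := by
    rw [ENNReal.tsum_toReal_eq fun _ => ENNReal.ofReal_ne_top]
    simp only [ENNReal.toReal_ofReal (exp_pos _).le]
  have h1 : 1 ≤ θ.toReal := by
    simpa using ENNReal.toReal_mono (ne_top_of_le_ne_top ENNReal.ofReal_ne_top hθ_le) hone_le
  have h2 : θ.toReal ≤ 1 + 2 * exp (2 * finrank ℝ V - π * t * r ^ 2) :=
    ENNReal.toReal_le_of_le_ofReal (by positivity) hθ_le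
  rw [heq, abs_of_nonneg (log_nonneg h1)]
  linarith [log_le_sub_one_of_pos (by linarith : 0 < θ.toReal)]

end Submodule

lemma tendsto_mul_sub_mul_sqrt_atTop {B : ℝ} (hB : 0 < B) (c : ℝ) :
    Tendsto (fun n : ℕ => B * n - c * √n) atTop atTop := by
  have hsqrt : Tendsto (fun n : ℕ => √(n : ℝ)) atTop atTop :=
    tendsto_sqrt_atTop.comp tendsto_natCast_atTop_atTop
  refine (hsqrt.atTop_mul_atTop₀ (tendsto_atTop_add_const_right _ (-c)
    (hsqrt.const_mul_atTop hB))).congr fun n => ?_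
  linear_combination B * mul_self_sqrt (Nat.cast_nonneg (α := ℝ) n)

lemma isLittleO_exp_sqrt_add_natCast_sq_inv_pow {C A τ : ℝ} (C₃ A₃ : ℝ) (hC : C ≠ 0)
    (hτ0 : 0 < τ) (hτ1 : τ < 1) :
    (fun n : ℕ => C₃ * exp (A₃ * √n) + n + 1) =o[atTop]
      fun n => (C * exp (-A * √n) * (1 / τ) ^ n) ^ 2 := by
  obtain ⟨B, hB, hτB⟩ : ∃ B, 0 < B ∧ 1 / τ = exp B :=
    ⟨log (1 / τ), log_pos (by rw [lt_div_iff₀ hτ0]; linarith), (exp_log (by positivity)).symm⟩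
  have hg : (fun n : ℕ => (C * exp (-A * √n) * (1 / τ) ^ n) ^ 2) =
      fun n : ℕ => C ^ 2 * exp (2 * B * n - 2 * A * √n) := by
    funext n
    rw [hτB, ← exp_nat_mul, mul_pow, mul_pow, ← exp_nat_mul,
      ← exp_nat_mul, mul_assoc, ← exp_add]
    ring_nf
  have hexp : (fun n : ℕ => exp (A₃ * √n)) =o[atTop] fun n => exp (2 * B * n - 2 * A * √n) :=
    isLittleO_exp_comp_exp_comp.mpr <|
      (tendsto_mul_sub_mul_sqrt_atTop (mul_pos two_pos hB) (2 * A + A₃)).congr fun n => by ring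
  have hlin : (fun n : ℕ => (n : ℝ)) =o[atTop] fun n => exp (2 * B * n - 2 * A * √n) := by
    have : (fun n : ℕ => (n : ℝ)) =o[atTop] fun n => exp (B * n) := by
      simpa [Function.comp_def] using
        (isLittleO_pow_exp_pos_mul_atTop 1 hB).comp_tendsto tendsto_natCast_atTop_atTop
    exact this.trans <| isLittleO_exp_comp_exp_comp.mpr <|
      (tendsto_mul_sub_mul_sqrt_atTop hB (2 * A)).congr fun n => by ring
  have hone : (fun _ : ℕ => (1 : ℝ)) =o[atTop] fun n => exp (2 * B * n - 2 * A * √n) :=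
    (isLittleO_one_left_iff ℝ).mpr <| by
      simpa only [norm_eq_abs, abs_exp, Function.comp_def] using
        tendsto_exp_atTop.comp (tendsto_mul_sub_mul_sqrt_atTop (mul_pos two_pos hB) (2 * A))
  rw [hg]
  exact (((hexp.const_mul_left C₃).add hlin).add hone).trans_isBigO
    (isBigO_self_const_mul (pow_ne_zero 2 hC) _ _)

theorem theta_finiteness_general (E : ℕ → Type*) [∀ n, NormedAddCommGroup (E n)]
    [∀ n, InnerProductSpace ℝ (E n)] [∀ n, FiniteDimensional ℝ (E n)]
    (L : ∀ n, Submodule ℤ (E n)) [∀ n, DiscreteTopology (L n)]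
    (C C₃ A A₃ : ℝ) (hC : 0 < C)
    (τ : ℝ) (hτ0 : 0 < τ) (hτ1 : τ < 1)
    (hrank : ∀ n : ℕ, (Module.finrank ℝ (E n) : ℝ) ≤ C₃ * Real.exp (A₃ * Real.sqrt n))
    (hmin : ∀ n : ℕ, C * Real.exp (-A * Real.sqrt n) * (1 / τ) ^ n ≤
      sInf ((fun v : E n => ‖v‖) '' {v : E n | v ∈ L n ∧ v ≠ 0})) :
    ∀ t : ℝ, 0 < t →
      Summable fun n : ℕ =>
        Real.log (∑' v : L n, Real.exp (-π * t * ‖(v : E n)‖ ^ 2)) := by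
  intro t ht
  set r : ℕ → ℝ := fun n => C * exp (-A * √n) * (1 / τ) ^ n
  have hr (n : ℕ) : 0 < r n := by positivity
  have hmin' (n : ℕ) : ∀ v ∈ L n, v ≠ 0 → r n ≤ ‖v‖ := fun v hv hv0 =>
    (hmin n).trans <| csInf_le ⟨0, by rintro _ ⟨w, -, rfl⟩; exact norm_nonneg w⟩ ⟨v, ⟨hv, hv0⟩, rfl⟩
  have hgrowth : ∀ᶠ n : ℕ in atTop, 2 * (finrank ℝ (E n) : ℝ) + n + 1 ≤ π * t * r n ^ 2 := by
    filter_upwards [(isLittleO_exp_sqrt_add_natCast_sq_inv_pow (2 * C₃) A₃ hC.ne' hτ0 hτ1).bound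
      (by positivity : 0 < π * t)] with n hn
    rw [norm_of_nonneg (by positivity : 0 ≤ r n ^ 2)] at hn
    linarith [hrank n, (Real.le_norm_self _).trans hn]
  refine (summable_exp_neg_nat.mul_left 2).of_norm_bounded_eventually ?_
  rw [Nat.cofinite_eq_atTop]
  filter_upwards [hgrowth] with n hn
  calc ‖log _‖ ≤ 2 * exp (2 * finrank ℝ (E n) - π * t * r n ^ 2) :=
        Submodule.abs_log_tsum_exp_neg_mul_norm_sq_le (hr n) ht.le (hmin' n) (by linarith)
    _ ≤ 2 * exp (-n) := by gcongr; linarith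

/-- Theta-finiteness: under the rank and first-minimum growth hypotheses, for every `t > 0`
the series of `t`-scaled theta invariants `∑ₙ log ∑_{v ∈ L n} exp(-π t ‖v‖²)` converges. -/
theorem theta_finiteness (E : ℕ → Type*) [∀ n, NormedAddCommGroup (E n)]
    [∀ n, InnerProductSpace ℝ (E n)] [∀ n, FiniteDimensional ℝ (E n)]
    (L : ∀ n, Submodule ℤ (E n)) [∀ n, DiscreteTopology (L n)] [∀ n, IsZLattice ℝ (L n)]
    (hL : ∀ n, L n ≠ ⊥)
    (C C₃ A A₃ : ℝ) (hC : 0 < C) (hC₃ : 0 < C₃) (hA : 0 < A) (hA₃ : 0 < A₃)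
    (τ : ℝ) (hτ0 : 0 < τ) (hτ1 : τ < 1)
    (hrank : ∀ n : ℕ, (Module.finrank ℝ (E n) : ℝ) ≤ C₃ * Real.exp (A₃ * Real.sqrt n))
    (hmin : ∀ n : ℕ, C * Real.exp (-A * Real.sqrt n) * (1 / τ) ^ n ≤
      sInf ((fun v : E n => ‖v‖) '' {v : E n | v ∈ L n ∧ v ≠ 0})) :
    ∀ t : ℝ, 0 < t →
      Summable fun n : ℕ =>
        Real.log (∑' v : L n, Real.exp (-π * t * ‖(v : E n)‖ ^ 2)) :=
  theta_finiteness_general E L C C₃ A A₃ hC τ hτ0 hτ1 hrank hmin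
end
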